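/- arXiv:1405.4535 — 2 statements merged into one kernel-verified Lean document; each statement's English description precedes it below -/
import Mathlib

section
/- If p is a prime power with p ≥ 2, then H(p−1, p) ≤ p² − 1; that is, there exist p−1 pairwise disjoint p-element Golomb rulers contained in {1, 2, ..., p²−1}. (Theorem 4, third part.) -/
/-- A finite set of naturals is a Golomb ruler if all differences of pairs of
distinct elements are distinct. -/
def IsGolomb (S : Finset ℕ) : Prop :=
  ∀ a ∈ S, ∀ b ∈ S, ∀ c ∈ S, ∀ d ∈ S, a ≠ b → c ≠ d →
    (a : ℤ) - (b : ℤ) = (c : ℤ) - (d : ℤ) → a = c ∧ b = d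

/-- `A` contains `I` pairwise disjoint `J`-element Golomb rulers. -/
def ContainsDGR (I J : ℕ) (A : Finset ℕ) : Prop :=
  ∃ f : Fin I → Finset ℕ,
    (∀ i, (f i).card = J ∧ f i ⊆ A ∧ IsGolomb (f i)) ∧
    ∀ i j, i ≠ j → Disjoint (f i) (f j)

/-- There is an `(I,J,n)`-DGR: `I` pairwise disjoint `J`-element Golomb rulers,
each a subset of `{1, 2, ..., n}`. -/
def HasDGR (I J n : ℕ) : Prop := ContainsDGR I J (Finset.Icc 1 n)

/-- `H I J` is the least positive `n` such that an `(I,J,n)`-DGR exists. -/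
noncomputable def H (I J : ℕ) : ℕ := sInf {n : ℕ | 0 < n ∧ HasDGR I J n}

/-!
Bose–Chowla construction. Let `K ⊆ F` be finite fields with `|K| = q`, `|F| = q²`, and let `ζ`
generate `Fˣ`, so `ζ ∉ K`. Since `1, ζ` are linearly independent over `K`, the products
`(ζ + a)(ζ + d) = ζ² + (a + d)ζ + ad` determine the pair `{a, d}`: the set `ζ + K` is a
multiplicative Sidon set, and so is each of its `q - 1` disjoint dilates `g(ζ + K)`, `g ∈ Kˣ`.
Taking discrete logarithms to base `ζ`, with values in `[1, q² - 1]`, turns multiplicative Sidon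
sets into Golomb rulers.
-/

open Finset

def IsMulSidon {M : Type*} [Mul M] (S : Set M) : Prop :=
  ∀ a ∈ S, ∀ b ∈ S, ∀ c ∈ S, ∀ d ∈ S, a ≠ b → a * d = b * c → a = c ∧ b = d

theorem IsMulSidon.image_mul_left {M : Type*} [CommMonoid M] {S : Set M} (hS : IsMulSidon S)
    {g : M} (hg : IsUnit g) : IsMulSidon ((g * ·) '' S) := by
  rintro _ ⟨a, ha, rfl⟩ _ ⟨b, hb, rfl⟩ _ ⟨c, hc, rfl⟩ _ ⟨d, hd, rfl⟩ hab h
  rw [mul_mul_mul_comm, mul_mul_mul_comm g b] at h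
  obtain ⟨rfl, rfl⟩ :=
    hS a ha b hb c hc d hd (fun hab' => hab (by rw [hab'])) ((hg.mul hg).mul_left_cancel h)
  exact ⟨rfl, rfl⟩

section PowExponents

variable {M : Type*} [Monoid M] {ζ : M}

theorem pow_injOn_Icc_one_orderOf (ζ : M) : Set.InjOn (ζ ^ ·) (Set.Icc 1 (orderOf ζ)) := by
  rintro a ⟨ha1, haN⟩ b ⟨hb1, hbN⟩ h
  have hζ : IsOfFinOrder ζ := orderOf_pos_iff.mp (by omega)
  refine (hζ.pow_eq_pow_iff_modEq.mp h).eq_of_abs_lt ?_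
  rw [abs_sub_lt_iff]
  omega

theorem IsOfFinOrder.exists_mem_Icc_one_orderOf_pow_eq (hζ : IsOfFinOrder ζ) (k : ℕ) :
    ∃ n ∈ Set.Icc 1 (orderOf ζ), ζ ^ n = ζ ^ k := by
  have hN := hζ.orderOf_pos
  rw [← pow_mod_orderOf ζ k]
  rcases Nat.eq_zero_or_pos (k % orderOf ζ) with h0 | hpos
  · exact ⟨orderOf ζ, ⟨hN, le_rfl⟩, by rw [h0, pow_zero, pow_orderOf_eq_one]⟩
  · exact ⟨k % orderOf ζ, ⟨hpos, (Nat.mod_lt k hN).le⟩, rfl⟩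

open Classical in
/-- The discrete logarithm of `S` to base `ζ`, with values in `[1, orderOf ζ]`. -/
noncomputable def powExponents (ζ : M) (S : Set M) : Finset ℕ :=
  {n ∈ Icc 1 (orderOf ζ) | ζ ^ n ∈ S}

theorem mem_powExponents {S : Set M} {n : ℕ} :
    n ∈ powExponents ζ S ↔ n ∈ Set.Icc 1 (orderOf ζ) ∧ ζ ^ n ∈ S := by
  simp [powExponents]

theorem IsMulSidon.isGolomb_powExponents {S : Set M} (hS : IsMulSidon S) :
    IsGolomb (powExponents ζ S) := by
  intro a ha b hb c hc d hd hab _ h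
  rw [mem_powExponents] at ha hb hc hd
  have hinj := pow_injOn_Icc_one_orderOf ζ
  have hmul : ζ ^ a * ζ ^ d = ζ ^ b * ζ ^ c := by
    rw [← pow_add, ← pow_add, show a + d = b + c by omega]
  obtain ⟨hac, hbd⟩ :=
    hS _ ha.2 _ hb.2 _ hc.2 _ hd.2 (fun h' => hab (hinj ha.1 hb.1 h')) hmul
  exact ⟨hinj ha.1 hc.1 hac, hinj hb.1 hd.1 hbd⟩

theorem disjoint_powExponents {S T : Set M} (h : Disjoint S T) :
    Disjoint (powExponents ζ S) (powExponents ζ T) :=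
  disjoint_left.mpr fun _ hS hT =>
    Set.disjoint_left.mp h (mem_powExponents.mp hS).2 (mem_powExponents.mp hT).2

theorem IsOfFinOrder.card_powExponents (hζ : IsOfFinOrder ζ) {S : Set M}
    (hS : S ⊆ Submonoid.powers ζ) : (powExponents ζ S).card = S.ncard := by
  have himage : (ζ ^ ·) '' (powExponents ζ S : Set ℕ) = S := by
    ext x
    simp only [Set.mem_image, mem_coe, mem_powExponents]
    constructor
    · rintro ⟨n, ⟨-, hn⟩, rfl⟩
      exact hn
    · intro hx
      obtain ⟨k, rfl⟩ := hS hx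
      obtain ⟨n, hn, hnk⟩ := hζ.exists_mem_Icc_one_orderOf_pow_eq k
      exact ⟨n, ⟨hn, hnk ▸ hx⟩, hnk⟩
  have hinj : Set.InjOn (ζ ^ ·) (powExponents ζ S : Set ℕ) :=
    (pow_injOn_Icc_one_orderOf ζ).mono fun n hn => (mem_powExponents.mp hn).1
  rw [← Set.ncard_coe_finset, ← hinj.ncard_image, himage]

theorem hasDGR_orderOf_of_isMulSidon {I J : ℕ} (hζ : IsOfFinOrder ζ) (S : Fin I → Set M)
    (hSidon : ∀ i, IsMulSidon (S i)) (hpow : ∀ i, S i ⊆ Submonoid.powers ζ)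
    (hcard : ∀ i, (S i).ncard = J) (hdisj : ∀ i j, i ≠ j → Disjoint (S i) (S j)) :
    HasDGR I J (orderOf ζ) :=
  ⟨fun i => powExponents ζ (S i),
    fun i => ⟨(hζ.card_powExponents (hpow i)).trans (hcard i),
      fun _ hn => mem_Icc.mpr (mem_powExponents.mp hn).1,
      (hSidon i).isGolomb_powExponents⟩,
    fun i j hij => disjoint_powExponents (hdisj i j hij)⟩

end PowExponents

section BoseChowla

variable {K L : Type*} [Field K] [Field L] (φ : K →+* L) {θ : L}

theorem eq_and_eq_of_map_mul_add_map_eq (hθ : θ ∉ Set.range φ) {s t s' t' : K}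
    (h : φ s * θ + φ t = φ s' * θ + φ t') : s = s' ∧ t = t' := by
  obtain rfl : s = s' := by
    by_contra hs
    refine hθ ⟨(t' - t) / (s - s'), ?_⟩
    rw [map_div₀, map_sub, map_sub, div_eq_iff (sub_ne_zero.mpr (φ.injective.ne hs))]
    linear_combination -h
  exact ⟨rfl, φ.injective (add_left_cancel h)⟩

theorem isMulSidon_range_add_map (hθ : θ ∉ Set.range φ) :
    IsMulSidon (Set.range fun c => θ + φ c) := by
  rintro _ ⟨a, rfl⟩ _ ⟨b, rfl⟩ _ ⟨c, rfl⟩ _ ⟨d, rfl⟩ hab h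
  obtain ⟨hsum, hprod⟩ := eq_and_eq_of_map_mul_add_map_eq φ hθ
    (s := a + d) (t := a * d) (s' := b + c) (t' := b * c)
    (by simp only [map_add, map_mul]; linear_combination h)
  have hab' : a - b ≠ 0 := sub_ne_zero.mpr fun hab' => hab (by rw [hab'])
  obtain rfl : a = c := by
    have : (a - b) * (a - c) = 0 := by linear_combination a * hsum - hprod
    exact sub_eq_zero.mp ((mul_eq_zero.mp this).resolve_left hab')
  obtain rfl : d = b := by linear_combination hsum
  exact ⟨rfl, rfl⟩

theorem disjoint_range_mul_add_map (hθ : θ ∉ Set.range φ) {g g' : K} (hg : g ≠ g') :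
    Disjoint (Set.range fun c => φ g * (θ + φ c)) (Set.range fun c => φ g' * (θ + φ c)) := by
  rw [Set.disjoint_left]
  rintro _ ⟨c, rfl⟩ ⟨c', h⟩
  refine hg (eq_and_eq_of_map_mul_add_map_eq φ hθ (t := g * c) (t' := g' * c') ?_).1
  simp only [map_mul]
  linear_combination -h

theorem notMem_range_of_card_sub_one_lt_orderOf [Finite K] (hθ : Nat.card K - 1 < orderOf θ) :
    θ ∉ Set.range φ := by
  rintro ⟨a, rfl⟩
  rw [show orderOf (φ a) = orderOf a from orderOf_injective φ.toMonoidHom φ.injective a] at hθ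
  obtain ⟨u, rfl⟩ := (orderOf_pos_iff.mp (show 0 < orderOf a by omega)).isUnit
  rw [orderOf_units, ← Nat.card_units] at hθ
  exact hθ.not_ge orderOf_le_card

end BoseChowla

theorem FiniteField.exists_orderOf_eq_card_sub_one (F : Type*) [Field F] [Finite F] :
    ∃ ζ : F, orderOf ζ = Nat.card F - 1 ∧ ∀ x ≠ 0, x ∈ Submonoid.powers ζ := by
  obtain ⟨u, hu⟩ := IsCyclic.exists_generator (α := Fˣ)
  refine ⟨u, by rw [orderOf_units, orderOf_eq_card_of_forall_mem_zpowers hu, Nat.card_units],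
    fun x hx => ?_⟩
  obtain ⟨n, hn⟩ := mem_powers_iff_mem_zpowers.mpr (hu (Units.mk0 x hx))
  exact ⟨n, by simpa using congrArg Units.val hn⟩

theorem hasDGR_of_card_eq_sq {K F : Type*} [Field K] [Field F] [Finite F] (φ : K →+* F)
    (hcard : Nat.card F = Nat.card K ^ 2) :
    HasDGR (Nat.card K - 1) (Nat.card K) (Nat.card K ^ 2 - 1) := by
  have : Finite K := Finite.of_injective φ φ.injective
  have hK : 1 < Nat.card K := Finite.one_lt_card
  obtain ⟨ζ, hord, hpow⟩ := FiniteField.exists_orderOf_eq_card_sub_one F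
  rw [hcard] at hord
  have hKsq : Nat.card K < Nat.card K ^ 2 := by nlinarith
  have hζ : ζ ∉ Set.range φ := notMem_range_of_card_sub_one_lt_orderOf φ (by omega)
  let e : Fin (Nat.card K - 1) ≃ Kˣ :=
    (finCongr (Nat.card_units K).symm).trans (Finite.equivFin Kˣ).symm
  have hinj (i) : Function.Injective fun c => φ (e i) * (ζ + φ c) :=
    (mul_right_injective₀ (by simp)).comp ((add_right_injective ζ).comp φ.injective)
  rw [← hord]
  refine hasDGR_orderOf_of_isMulSidon (orderOf_pos_iff.mp (by omega))
    (fun i => Set.range fun c => φ (e i) * (ζ + φ c)) (fun i => ?_) (fun i => ?_)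
    (fun i => Set.ncard_range_of_injective (hinj i)) (fun i j hij => ?_)
  · have := (isMulSidon_range_add_map φ hζ).image_mul_left
      ((map_ne_zero φ).mpr (e i).ne_zero).isUnit
    rwa [← Set.range_comp] at this
  · rintro _ ⟨c, rfl⟩
    refine hpow _ (mul_ne_zero (by simp) fun h => hζ ⟨-c, ?_⟩)
    rw [map_neg, eq_neg_of_add_eq_zero_left h]
  · exact disjoint_range_mul_add_map φ hζ (Units.val_injective.ne (e.injective.ne hij))

theorem H_primePow_pred_rulers_general (p : ℕ) (hp : IsPrimePow p) :
    H (p - 1) p ≤ p ^ 2 - 1 := by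
  obtain ⟨r, m, hr, hm, rfl⟩ := hp
  have : Fact r.Prime := ⟨hr.nat_prime⟩
  have hK : Nat.card (GaloisField r m) = r ^ m := GaloisField.card r m hm.ne'
  have hF := FiniteField.natCard_extension (GaloisField r m) r 2
  refine Nat.sInf_le ⟨?_, hK ▸ hasDGR_of_card_eq_sq (algebraMap _ _) hF⟩
  have := Nat.one_lt_pow two_ne_zero (Nat.one_lt_pow hm.ne' hr.nat_prime.one_lt)
  omega

theorem H_primePow_pred_rulers (p : ℕ) (hp : IsPrimePow p) (h2 : 2 ≤ p) :
    H (p - 1) p ≤ p ^ 2 - 1 :=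
  H_primePow_pred_rulers_general p hp
end

section
/- Suppose that for all positive integers I and J ≥ 3, whenever H(I, J) = I·J, every J-element Golomb ruler A₁ ⊆ {1, 2, ..., (I+1)J} is contained in some family of I+1 pairwise disjoint J-element Golomb rulers all contained in {1, 2, ..., (I+1)J}. Then for all positive integers I₀ ≥ 2 and J ≥ 3, if H(I₀, J) = I₀·J, then H(I, J) = I·J for every integer I > I₀. (Conjecture 4 implies Conjecture 3.) -/
lemma lb {I J n : ℕ} (h : HasDGR I J n) : I * J ≤ n := by
  obtain ⟨f, hf, hdisj⟩ := h
  have hcard : (Finset.univ.biUnion f).card = I * J := by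
    rw [Finset.card_biUnion (fun i _ j _ hij => hdisj i j hij)]
    simp [(fun i => (hf i).1)]
  have hsub : Finset.univ.biUnion f ⊆ Finset.Icc 1 n := by
    intro x hx
    simp only [Finset.mem_biUnion] at hx
    obtain ⟨i, _, hxi⟩ := hx
    exact (hf i).2.1 hxi
  have := Finset.card_le_card hsub
  simpa [hcard, Nat.card_Icc] using this

lemma step (hconj4 : ∀ I J : ℕ, 1 ≤ I → 3 ≤ J → H I J = I * J →
      ∀ A₁ : Finset ℕ, A₁.card = J → A₁ ⊆ Finset.Icc 1 ((I + 1) * J) → IsGolomb A₁ →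
        ∃ f : Fin (I + 1) → Finset ℕ,
          (∃ i, f i = A₁) ∧
          (∀ i, (f i).card = J ∧ f i ⊆ Finset.Icc 1 ((I + 1) * J) ∧ IsGolomb (f i)) ∧
          ∀ i j, i ≠ j → Disjoint (f i) (f j))
    (I J : ℕ) (hI : 1 ≤ I) (hJ : 3 ≤ J) (h : H I J = I * J) :
    H (I + 1) J = (I + 1) * J := by
  have hpos : 0 < I * J := Nat.mul_pos hI (by omega)
  have hne : {n : ℕ | 0 < n ∧ HasDGR I J n}.Nonempty := by
    by_contra h'
    rw [Set.not_nonempty_iff_eq_empty] at h'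
    rw [H, h', Nat.sInf_empty] at h
    omega
  have hmem : I * J ∈ {n : ℕ | 0 < n ∧ HasDGR I J n} := by
    rw [← h]; exact Nat.sInf_mem hne
  obtain ⟨-, f, hf, hdisj⟩ := hmem
  set A₁ := f ⟨0, by omega⟩ with hA₁
  have hsub : A₁ ⊆ Finset.Icc 1 ((I + 1) * J) := by
    refine (hf _).2.1.trans (Finset.Icc_subset_Icc_right ?_)
    exact Nat.mul_le_mul_right _ (by omega)
  obtain ⟨g, -, hg, hgdisj⟩ := hconj4 I J hI hJ h A₁ (hf _).1 hsub (hf _).2.2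
  have hmem' : (I + 1) * J ∈ {n : ℕ | 0 < n ∧ HasDGR (I + 1) J n} :=
    ⟨Nat.mul_pos (by omega) (by omega), g, hg, hgdisj⟩
  refine le_antisymm (Nat.sInf_le hmem') (le_csInf ⟨_, hmem'⟩ ?_)
  rintro n ⟨-, hn⟩
  exact lb hn

theorem conj4_implies_conj3
    (hconj4 : ∀ I J : ℕ, 1 ≤ I → 3 ≤ J → H I J = I * J →
      ∀ A₁ : Finset ℕ, A₁.card = J → A₁ ⊆ Finset.Icc 1 ((I + 1) * J) → IsGolomb A₁ →
        ∃ f : Fin (I + 1) → Finset ℕ,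
          (∃ i, f i = A₁) ∧
          (∀ i, (f i).card = J ∧ f i ⊆ Finset.Icc 1 ((I + 1) * J) ∧ IsGolomb (f i)) ∧
          ∀ i j, i ≠ j → Disjoint (f i) (f j)) :
    ∀ I₀ J : ℕ, 2 ≤ I₀ → 3 ≤ J → H I₀ J = I₀ * J →
      ∀ I : ℕ, I₀ < I → H I J = I * J := by
  intro I₀ J hI₀ hJ h I hI
  induction I, hI using Nat.le_induction with
  | base => exact step hconj4 I₀ J (by omega) hJ h
  | succ m hm ih => exact step hconj4 m J (by omega) hJ ih
end
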